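/- arXiv:1412.4923 — 2 statements merged into one kernel-verified Lean document; each statement's English description precedes it below -/
import Mathlib

section
/- Let c be an integer and R_c = ℚ[a,b]/(b⁴, a⁴ + c·a³·b). Let P̃ = (1−b²)⁴·((1+a)⁴ + c·b·(1+a)³)·((1−a)⁴ − c·b·(1−a)³) ∈ R_c and for each i let p_i = (−1)ⁱ times the homogeneous degree-2i component of P̃ (with deg a = deg b = 1). Then p₁³ = −8c³ · a³b³ in R_c. (Equivalently: the Pontryagin number p₁³[X¹²_c] of the projectivization X¹²_c = P((c·γ¹) ⊕ ε³) over ℂP³ equals −8c³.) -/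
set_option maxHeartbeats 1000000

open MvPolynomial

namespace HW1

noncomputable def a : MvPolynomial (Fin 2) ℚ := X 0
noncomputable def b : MvPolynomial (Fin 2) ℚ := X 1

noncomputable def I (c : ℤ) : Ideal (MvPolynomial (Fin 2) ℚ) :=
  Ideal.span {b ^ 4, a ^ 4 + C (c : ℚ) * (a ^ 3 * b)}

noncomputable def Pt (c : ℤ) : MvPolynomial (Fin 2) ℚ :=
  (1 - b ^ 2) ^ 4 * ((1 + a) ^ 4 + C (c : ℚ) * b * (1 + a) ^ 3) *
    ((1 - a) ^ 4 - C (c : ℚ) * b * (1 - a) ^ 3)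

/-- `p c i` is `(-1)^i` times the homogeneous degree-`2*i` component of `Pt c`
(with `deg a = deg b = 1`), i.e. the `i`-th Pontryagin class. -/
noncomputable def p (c : ℤ) (i : ℕ) : MvPolynomial (Fin 2) ℚ :=
  ((-1 : ℚ) ^ i) • homogeneousComponent (2 * i) (Pt c)

lemma aux (r : ℚ) (i j n : ℕ) (h : i + j = n) :
    (C r * (X 0 ^ i * X 1 ^ j) : MvPolynomial (Fin 2) ℚ).IsHomogeneous n := by
  subst h
  simpa using (isHomogeneous_C (Fin 2) r).mul
    (((isHomogeneous_X ℚ (0 : Fin 2)).pow i).mul ((isHomogeneous_X ℚ (1 : Fin 2)).pow j))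

lemma hc (n : ℕ) (r : ℚ) (i j : ℕ) :
    homogeneousComponent n (C r * (X 0 ^ i * X 1 ^ j) : MvPolynomial (Fin 2) ℚ) =
      if n = i + j then C r * (X 0 ^ i * X 1 ^ j) else 0 :=
  homogeneousComponent_of_mem ((mem_homogeneousSubmodule _ _).2 (aux r i j _ rfl))

lemma hP1 (c : ℤ) : homogeneousComponent 2 (Pt c) =
    C (-4-(c:ℚ)^2) * (X 0 ^ 0 * X 1 ^ 2) + C (-2*(c:ℚ)) * (X 0 ^ 1 * X 1 ^ 1) + C (-4 : ℚ) * (X 0 ^ 2 * X 1 ^ 0) := by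
  have hdecomp : Pt c = (C (1) * (X 0 ^ 0 * X 1 ^ 0)) + (C (-4-(c:ℚ)^2) * (X 0 ^ 0 * X 1 ^ 2) + C (-2*(c:ℚ)) * (X 0 ^ 1 * X 1 ^ 1) + C (-4) * (X 0 ^ 2 * X 1 ^ 0)) + (C (6+4*(c:ℚ)^2) * (X 0 ^ 0 * X 1 ^ 4) + C (8*(c:ℚ)) * (X 0 ^ 1 * X 1 ^ 3) + C (16+3*(c:ℚ)^2) * (X 0 ^ 2 * X 1 ^ 2) + C (6*(c:ℚ)) * (X 0 ^ 3 * X 1 ^ 1) + C (6) * (X 0 ^ 4 * X 1 ^ 0)) + (C (-4-6*(c:ℚ)^2) * (X 0 ^ 0 * X 1 ^ 6) + C (-12*(c:ℚ)) * (X 0 ^ 1 * X 1 ^ 5) + C (-24-12*(c:ℚ)^2) * (X 0 ^ 2 * X 1 ^ 4) + C (-24*(c:ℚ)) * (X 0 ^ 3 * X 1 ^ 3) + C (-24-3*(c:ℚ)^2) * (X 0 ^ 4 * X 1 ^ 2) + C (-6*(c:ℚ)) * (X 0 ^ 5 * X 1 ^ 1) + C (-4) * (X 0 ^ 6 * X 1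 ^ 0)) + (C (1+4*(c:ℚ)^2) * (X 0 ^ 0 * X 1 ^ 8) + C (8*(c:ℚ)) * (X 0 ^ 1 * X 1 ^ 7) + C (16+18*(c:ℚ)^2) * (X 0 ^ 2 * X 1 ^ 6) + C (36*(c:ℚ)) * (X 0 ^ 3 * X 1 ^ 5) + C (36+12*(c:ℚ)^2) * (X 0 ^ 4 * X 1 ^ 4) + C (24*(c:ℚ)) * (X 0 ^ 5 * X 1 ^ 3) + C (16+(c:ℚ)^2) * (X 0 ^ 6 * X 1 ^ 2) + C (2*(c:ℚ)) * (X 0 ^ 7 * X 1 ^ 1) + C (1) * (X 0 ^ 8 * X 1 ^ 0)) + (C (-(c:ℚ)^2) * (X 0 ^ 0 * X 1 ^ 10) + C (-2*(c:ℚ)) * (X 0 ^ 1 * X 1 ^ 9) + C (-4-12*(c:ℚ)^2) * (X 0 ^ 2 * X 1 ^ 8) + C (-24*(c:ℚ)) * (X 0 ^ 3 * X 1 ^ 7) + C (-24-18*(c:ℚ)^2) * (X 0 ^ 4 * X 1 ^ 6) + C (-36*(c:ℚ)) * (X 0 ^ 5 * X 1 ^ 5) + C (-24-4*(c:ℚ)^2)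 * (X 0 ^ 6 * X 1 ^ 4) + C (-8*(c:ℚ)) * (X 0 ^ 7 * X 1 ^ 3) + C (-4) * (X 0 ^ 8 * X 1 ^ 2)) + (C (3*(c:ℚ)^2) * (X 0 ^ 2 * X 1 ^ 10) + C (6*(c:ℚ)) * (X 0 ^ 3 * X 1 ^ 9) + C (6+12*(c:ℚ)^2) * (X 0 ^ 4 * X 1 ^ 8) + C (24*(c:ℚ)) * (X 0 ^ 5 * X 1 ^ 7) + C (16+6*(c:ℚ)^2) * (X 0 ^ 6 * X 1 ^ 6) + C (12*(c:ℚ)) * (X 0 ^ 7 * X 1 ^ 5) + C (6) * (X 0 ^ 8 * X 1 ^ 4)) + (C (-3*(c:ℚ)^2) * (X 0 ^ 4 * X 1 ^ 10) + C (-6*(c:ℚ)) * (X 0 ^ 5 * X 1 ^ 9) + C (-4-4*(c:ℚ)^2) * (X 0 ^ 6 * X 1 ^ 8) + C (-8*(c:ℚ)) * (X 0 ^ 7 * X 1 ^ 7) + C (-4) * (X 0 ^ 8 * X 1 ^ 6)) + (C ((c:ℚ)^2) * (X 0 ^ 6 * X 1 ^ 10) + C (2*(c:ℚ)) * (X 0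 ^ 7 * X 1 ^ 9) + C (1) * (X 0 ^ 8 * X 1 ^ 8)) := by
    unfold Pt a b
    simp only [map_ofNat, map_sub, map_add, map_mul, map_pow, map_neg, map_one, map_intCast]
    ring
  rw [hdecomp]
  simp only [LinearMap.map_add, hc]
  norm_num

theorem pontryagin_number (c : ℤ) :
    Ideal.Quotient.mk (I c) (p c 1 ^ 3) =
      Ideal.Quotient.mk (I c) (C (-8 * (c : ℚ) ^ 3) * (a ^ 3 * b ^ 3)) := by
  have hp1 : p c 1 = 4 * a ^ 2 + 2 * C (c:ℚ) * (a * b) + (C (c:ℚ) ^ 2 + 4) * b ^ 2 := by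
    unfold p
    rw [show (2*1 : ℕ) = 2 from rfl, hP1]
    unfold a b
    simp only [smul_eq_C_mul, map_ofNat, map_sub, map_add, map_mul, map_pow, map_neg, map_one,
      map_intCast]
    ring
  rw [Ideal.Quotient.mk_eq_mk_iff_sub_mem]
  have key : p c 1 ^ 3 - C (-8 * (c : ℚ) ^ 3) * (a ^ 3 * b ^ 3) =
      ((24 * C (c:ℚ)^4 + 144 * C (c:ℚ)^2 + 192) * a^2
        + (6 * C (c:ℚ)^5 + 48 * C (c:ℚ)^3 + 96 * C (c:ℚ)) * (a*b)
        + (C (c:ℚ)^6 + 12 * C (c:ℚ)^4 + 48 * C (c:ℚ)^2 + 64) * b^2) * (b ^ 4)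
      + (64 * a^2 + 32 * C (c:ℚ) * (a*b) + (64 * C (c:ℚ)^2 + 192) * b^2)
          * (a ^ 4 + C (c : ℚ) * (a ^ 3 * b)) := by
    rw [hp1]; unfold a b
    simp only [map_ofNat, map_sub, map_add, map_mul, map_pow, map_neg, map_one, map_intCast]
    ring
  rw [key]
  exact Ideal.add_mem _
    (Ideal.mul_mem_left _ _ (Ideal.subset_span (by simp)))
    (Ideal.mul_mem_left _ _ (Ideal.subset_span (by simp)))

end HW1
end

section
/- Let λ₄, λ₅, λ₆, λ₇ ∈ ℚ. Define f₁, f₂ : ℤ → ℚ by f₁(c) = 2⁷c⁷·(−3λ₆ − 9λ₇) + 2⁵c⁵·(−24λ₅ − 96λ₆ − 240λ₇) + 2³c³·(−28λ₄ − 232λ₅ − 580λ₆ − 1056λ₇) and f₂(c) = 2³c³·(−7λ₄ − 4λ₅ − 7λ₆ + 52λ₇) + 2²c²·(42λ₅ + 66λ₆ + 48λ₇) + 2c·(224λ₅ + 352λ₆ + 256λ₇). If both f₁ and f₂ are bounded in absolute value on ℤ, then λ₄ = λ₅ = λ₆ = λ₇ = 0. -/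
/-!
Both `f₁` and `f₂` are evaluations of rational polynomials without constant term. A polynomial
of positive degree has `|P(x)| → ∞` as `x → ∞`, so boundedness on the integers forces every
nonconstant coefficient to vanish. This gives five linear equations in `λ₄, …, λ₇`, and the
equations from the `c⁷`, `c⁵`, `c³` coefficients of `f₁` and the `c³`, `c²` coefficients of `f₂`
already force all four to be zero.
-/

open Polynomial Filter

namespace Polynomial

theorem degree_nonpos_of_abs_eval_natCast_le {𝕜 : Type*} [NormedField 𝕜] [LinearOrder 𝕜]
    [IsStrictOrderedRing 𝕜] [OrderTopology 𝕜] [Archimedean 𝕜] (P : 𝕜[X]) {B : 𝕜}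
    (h : ∀ n : ℕ, |P.eval (n : 𝕜)| ≤ B) : P.degree ≤ 0 := by
  by_contra! hdeg
  obtain ⟨n, hn⟩ :=
    ((P.abs_tendsto_atTop hdeg).comp tendsto_natCast_atTop_atTop).eventually_gt_atTop B |>.exists
  exact (h n).not_gt hn

theorem coeff_eq_zero_of_abs_eval_intCast_le_real (P : ℚ[X]) {B : ℝ}
    (h : ∀ c : ℤ, ((|P.eval (c : ℚ)| : ℚ) : ℝ) ≤ B) (n : ℕ) (hn : n ≠ 0) :
    P.coeff n = 0 := by
  obtain ⟨q, hBq⟩ := exists_rat_gt B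
  have hdeg : P.degree ≤ 0 := P.degree_nonpos_of_abs_eval_natCast_le (B := q) fun m => by
    exact_mod_cast (h m).trans hBq.le
  exact coeff_eq_zero_of_degree_lt (hdeg.trans_lt (by exact_mod_cast Nat.pos_of_ne_zero hn))

end Polynomial

namespace HW18

theorem dim20_unbounded (l₄ l₅ l₆ l₇ : ℚ)
    (f₁ : ℤ → ℚ) (f₂ : ℤ → ℚ)
    (hf₁ : ∀ c : ℤ, f₁ c =
      2 ^ 7 * (c : ℚ) ^ 7 * (-3 * l₆ - 9 * l₇) +
        2 ^ 5 * (c : ℚ) ^ 5 * (-24 * l₅ - 96 * l₆ - 240 * l₇) +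
        2 ^ 3 * (c : ℚ) ^ 3 * (-28 * l₄ - 232 * l₅ - 580 * l₆ - 1056 * l₇))
    (hf₂ : ∀ c : ℤ, f₂ c =
      2 ^ 3 * (c : ℚ) ^ 3 * (-7 * l₄ - 4 * l₅ - 7 * l₆ + 52 * l₇) +
        2 ^ 2 * (c : ℚ) ^ 2 * (42 * l₅ + 66 * l₆ + 48 * l₇) +
        2 * (c : ℚ) * (224 * l₅ + 352 * l₆ + 256 * l₇))
    (hb₁ : ∃ B : ℝ, ∀ c : ℤ, ((|f₁ c| : ℚ) : ℝ) ≤ B)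
    (hb₂ : ∃ B : ℝ, ∀ c : ℤ, ((|f₂ c| : ℚ) : ℝ) ≤ B) :
    l₄ = 0 ∧ l₅ = 0 ∧ l₆ = 0 ∧ l₇ = 0 := by
  obtain ⟨B₁, hB₁⟩ := hb₁
  obtain ⟨B₂, hB₂⟩ := hb₂
  have h₁ := (C (2 ^ 7 * (-3 * l₆ - 9 * l₇)) * X ^ 7
      + C (2 ^ 5 * (-24 * l₅ - 96 * l₆ - 240 * l₇)) * X ^ 5
      + C (2 ^ 3 * (-28 * l₄ - 232 * l₅ - 580 * l₆ - 1056 * l₇)) * X ^ 3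
      ).coeff_eq_zero_of_abs_eval_intCast_le_real (B := B₁) fun c => by
    convert hB₁ c using 4; simp [hf₁]; ring
  have h₂ := (C (2 ^ 3 * (-7 * l₄ - 4 * l₅ - 7 * l₆ + 52 * l₇)) * X ^ 3
      + C (2 ^ 2 * (42 * l₅ + 66 * l₆ + 48 * l₇)) * X ^ 2
      + C (2 * (224 * l₅ + 352 * l₆ + 256 * l₇)) * X
      ).coeff_eq_zero_of_abs_eval_intCast_le_real (B := B₂) fun c => by
    convert hB₂ c using 4; simp [hf₂]; ring
  have e₇ := h₁ 7 (by norm_num)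
  have e₅ := h₁ 5 (by norm_num)
  have e₃ := h₁ 3 (by norm_num)
  have e₃' := h₂ 3 (by norm_num)
  have e₂' := h₂ 2 (by norm_num)
  simp only [coeff_add, coeff_C_mul, coeff_X_pow, coeff_X] at e₇ e₅ e₃ e₃' e₂'
  norm_num at e₇ e₅ e₃ e₃' e₂'
  refine ⟨by linarith, by linarith, by linarith, by linarith⟩

end HW18
end
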